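/- Let E ⊆ ℝ^d have finite measure and let A, B be sampling matrices for bands E, F respectively. Then the orthogonal projections P_A and P_B of ℓ²(ℤ^d) onto the ranges of the sampling transforms Θ_A(V_E) and Θ_B(V_F) commute: P_A P_B = P_B P_A. -/

import Mathlib

/-!
Translating a sample sequence `a = (𝓕⁻ f (A z))_z` by `w ∈ ℤ^d` amounts to multiplying `f` by
the character `ξ ↦ 𝐞 (-⟪ξ, A w⟫)`, which keeps `f` in `L²` and supported in `E`; so both ranges
are translation invariant, and hence both orthogonal projections commute with translations.
A bounded translation-invariant operator on `ℓ²(G)` is convolution with its value at `δ₀`, and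
convolutions commute.
-/

open MeasureTheory ENNReal Matrix

noncomputable section

abbrev Ed (d : ℕ) := EuclideanSpace ℝ (Fin d)

def toE {d : ℕ} (v : Fin d → ℝ) : Ed d := WithLp.toLp 2 v

def unitBox (d : ℕ) : Set (Ed d) := {ξ | ∀ i, ξ i ∈ Set.Ico (0 : ℝ) 1}

def periodization {d : ℕ} (E : Set (Ed d)) (A : Matrix (Fin d) (Fin d) ℝ)
    (ξ : Ed d) : ℝ≥0∞ :=
  ∑' k : Fin d → ℤ,
    E.indicator (fun _ => (1 : ℝ≥0∞)) (toE ((Aᵀ)⁻¹.mulVec fun i => ξ i + (k i : ℝ)))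

/-- The range of the sampling transform `Θ_A : V_E → ℓ²(ℤ^d)`. -/
def samplingRange {d : ℕ} (E : Set (Ed d)) (A : Matrix (Fin d) (Fin d) ℝ) :
    Set ((Fin d → ℤ) → ℂ) :=
  {a | ∃ Fh : Ed d → ℂ, MemLp Fh 2 volume ∧ (∀ x ∉ E, Fh x = 0) ∧
    a = fun z => FourierTransformInv.fourierInv Fh (toE (A.mulVec fun i => (z i : ℝ)))}

/-- `ℓ²(ℤ^d)`. -/
abbrev l2Zd (d : ℕ) := lp (fun _ : Fin d → ℤ => ℂ) 2


theorem eq_of_forall_inner_sub_eq_zero {𝕜 E : Type*} [RCLike 𝕜] [NormedAddCommGroup E]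
    [InnerProductSpace 𝕜 E] {M : Set E} {x p q : E} (hp : p ∈ M) (hq : q ∈ M)
    (hxp : ∀ y ∈ M, inner 𝕜 (x - p) y = 0) (hxq : ∀ y ∈ M, inner 𝕜 (x - q) y = 0) : p = q := by
  have h : inner 𝕜 (p - q) (p - q) = 0 := by
    calc inner 𝕜 (p - q) (p - q) = inner 𝕜 ((x - q) - (x - p)) (p - q) := by congr 1; abel
      _ = 0 := by simp only [inner_sub_left, inner_sub_right, hxp _ hp, hxp _ hq, hxq _ hp,
        hxq _ hq, sub_zero]
  rwa [inner_self_eq_zero, sub_eq_zero] at h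

section TranslationInvariant

variable {𝕜 : Type*} [RCLike 𝕜] {G : Type*} [AddCommGroup G]

namespace lp

theorem memℓp_comp_sub (a : lp (fun _ : G => 𝕜) 2) (w : G) : Memℓp (fun z => a (z - w)) 2 :=
  memℓp_gen <| (Equiv.subRight w).summable_iff.2 <| (lp.memℓp a).summable (by norm_num)

def translate (w : G) (a : lp (fun _ : G => 𝕜) 2) : lp (fun _ : G => 𝕜) 2 :=
  ⟨fun z => a (z - w), memℓp_comp_sub a w⟩

@[simp]
theorem translate_apply (w : G) (a : lp (fun _ : G => 𝕜) 2) (z : G) :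
    translate w a z = a (z - w) := rfl

theorem translate_sub (w : G) (a b : lp (fun _ : G => 𝕜) 2) :
    translate w (a - b) = translate w a - translate w b := rfl

theorem translate_translate_neg (w : G) (a : lp (fun _ : G => 𝕜) 2) :
    translate w (translate (-w) a) = a := by
  ext z
  simp

theorem inner_translate_translate (w : G) (a b : lp (fun _ : G => 𝕜) 2) :
    inner 𝕜 (translate w a) (translate w b) = inner 𝕜 a b := by
  simp only [lp.inner_eq_tsum]
  exact (Equiv.subRight w).tsum_eq fun z => inner 𝕜 (a z) (b z)

theorem translate_single [DecidableEq G] (w v : G) (c : 𝕜) :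
    translate w (lp.single 2 v c) = lp.single 2 (v + w) c := by
  ext z
  simp only [translate_apply, lp.single_apply, Pi.single_apply, sub_eq_iff_eq_add]

end lp

def IsTranslationInvariant (T : lp (fun _ : G => 𝕜) 2 →L[𝕜] lp (fun _ : G => 𝕜) 2) : Prop :=
  ∀ w a, T (lp.translate w a) = lp.translate w (T a)

namespace IsTranslationInvariant

variable {T S : lp (fun _ : G => 𝕜) 2 →L[𝕜] lp (fun _ : G => 𝕜) 2}

theorem comp (hT : IsTranslationInvariant T) (hS : IsTranslationInvariant S) :
    IsTranslationInvariant (T.comp S) := fun w a => by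
  simp only [ContinuousLinearMap.comp_apply, hS w a, hT w (S a)]

variable [DecidableEq G]

theorem apply_eq_tsum (hT : IsTranslationInvariant T) (a : lp (fun _ : G => 𝕜) 2) (z : G) :
    T a z = ∑' w, a w * T (lp.single 2 0 1) (z - w) := by
  have hsum : HasSum (fun w => T (lp.single 2 w (a w))) (T a) :=
    (lp.hasSum_single (by norm_num) a).mapL T
  refine ((hsum.mapL (lp.evalCLM 𝕜 (fun _ : G => 𝕜) 2 z)).tsum_eq.symm.trans ?_)
  refine tsum_congr fun w => ?_
  have hsingle : lp.single 2 w (a w) = a w • lp.translate w (lp.single 2 (0 : G) (1 : 𝕜)) := by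
    rw [lp.translate_single, zero_add, ← lp.single_smul, smul_eq_mul, mul_one]
  rw [hsingle, map_smul, hT]
  rfl

theorem ext (hT : IsTranslationInvariant T) (hS : IsTranslationInvariant S)
    (h : T (lp.single 2 0 1) = S (lp.single 2 0 1)) : T = S := by
  ext a z
  rw [hT.apply_eq_tsum, hS.apply_eq_tsum, h]

theorem comp_comm (hT : IsTranslationInvariant T) (hS : IsTranslationInvariant S) :
    T.comp S = S.comp T := by
  refine (hT.comp hS).ext (hS.comp hT) ?_
  ext z
  simp only [ContinuousLinearMap.comp_apply]
  rw [hT.apply_eq_tsum, hS.apply_eq_tsum, ← (Equiv.subLeft z).tsum_eq]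
  refine tsum_congr fun w => ?_
  rw [Equiv.subLeft_apply, _root_.sub_sub_cancel, mul_comm]

end IsTranslationInvariant

def IsOrthogonalProjectionOnto (P : lp (fun _ : G => 𝕜) 2 →L[𝕜] lp (fun _ : G => 𝕜) 2)
    (M : Set (G → 𝕜)) : Prop :=
  ∀ x, ⇑(P x) ∈ M ∧ ∀ y : lp (fun _ : G => 𝕜) 2, ⇑y ∈ M → inner 𝕜 (x - P x) y = 0

theorem IsTranslationInvariant.of_isOrthogonalProjectionOnto {M : Set (G → 𝕜)}
    (hM : ∀ a ∈ M, ∀ w, (fun z => a (z - w)) ∈ M)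
    {P : lp (fun _ : G => 𝕜) 2 →L[𝕜] lp (fun _ : G => 𝕜) 2} (hP : IsOrthogonalProjectionOnto P M) :
    IsTranslationInvariant P := by
  intro w x
  have hmem : ⇑(lp.translate w (P x)) ∈ M := hM _ (hP x).1 w
  have horth : ∀ y : lp (fun _ : G => 𝕜) 2, ⇑y ∈ M →
      inner 𝕜 (lp.translate w x - lp.translate w (P x)) y = 0 := by
    intro y hy
    rw [← lp.translate_sub, ← lp.translate_translate_neg w y, lp.inner_translate_translate]
    exact (hP x).2 _ (hM _ hy (-w))
  exact eq_of_forall_inner_sub_eq_zero (M := {y : lp (fun _ : G => 𝕜) 2 | ⇑y ∈ M})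
    (hP _).1 hmem (hP _).2 horth

end TranslationInvariant

open scoped FourierTransform RealInnerProductSpace

theorem Real.fourierInv_apply_sub {V E : Type*} [NormedAddCommGroup V] [InnerProductSpace ℝ V]
    [MeasurableSpace V] [BorelSpace V] [FiniteDimensional ℝ V] [NormedAddCommGroup E]
    [NormedSpace ℂ E] (f : V → E) (x v : V) :
    𝓕⁻ f (x - v) = 𝓕⁻ (fun ξ => 𝐞 (-⟪ξ, v⟫) • f ξ) x := by
  simp only [Real.fourierInv_eq, sub_eq_add_neg, inner_add_right, inner_neg_right,
    AddChar.map_add_eq_mul, mul_smul]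

theorem comp_sub_mem_samplingRange {d : ℕ} {E : Set (Ed d)} {A : Matrix (Fin d) (Fin d) ℝ}
    {a : (Fin d → ℤ) → ℂ} (ha : a ∈ samplingRange E A) (w : Fin d → ℤ) :
    (fun z => a (z - w)) ∈ samplingRange E A := by
  obtain ⟨f, hf, hfE, rfl⟩ := ha
  set v := toE (A *ᵥ fun i => (w i : ℝ))
  refine ⟨fun ξ => 𝐞 (-⟪ξ, v⟫) • f ξ, ?_, fun ξ hξ => by simp [hfE ξ hξ], ?_⟩
  · refine hf.of_le ?_ (.of_forall fun ξ => (Circle.norm_smul _ _).le)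
    exact ((Real.continuous_fourierChar.comp (by fun_prop)).aestronglyMeasurable).smul hf.1
  · funext z
    have hsub : toE (A *ᵥ fun i => ((z - w) i : ℝ)) = toE (A *ᵥ fun i => (z i : ℝ)) - v := by
      simp only [v, toE, ← WithLp.toLp_sub, ← Matrix.mulVec_sub]
      congr 2
      ext i
      simp
    exact (congrArg _ hsub).trans (Real.fourierInv_apply_sub f _ v)

theorem stmt13 {d : ℕ} (E F : Set (Ed d)) (A B : Matrix (Fin d) (Fin d) ℝ)
    (PA PB : l2Zd d →L[ℂ] l2Zd d)
    -- PA is the orthogonal projection onto Θ_A(V_E)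
    (hPA : ∀ x : l2Zd d, ((PA x : ∀ _ : Fin d → ℤ, ℂ) ∈ samplingRange E A) ∧
      ∀ y : l2Zd d, ((y : ∀ _ : Fin d → ℤ, ℂ) ∈ samplingRange E A) →
        (inner ℂ (x - PA x) y : ℂ) = 0)
    -- PB is the orthogonal projection onto Θ_B(V_F)
    (hPB : ∀ x : l2Zd d, ((PB x : ∀ _ : Fin d → ℤ, ℂ) ∈ samplingRange F B) ∧
      ∀ y : l2Zd d, ((y : ∀ _ : Fin d → ℤ, ℂ) ∈ samplingRange F B) →
        (inner ℂ (x - PB x) y : ℂ) = 0) :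
    PA.comp PB = PB.comp PA :=
  IsTranslationInvariant.comp_comm
    (.of_isOrthogonalProjectionOnto (fun _ => comp_sub_mem_samplingRange) hPA)
    (.of_isOrthogonalProjectionOnto (fun _ => comp_sub_mem_samplingRange) hPB)

end
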